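/- For any threshold graph with degree partition D_0, D_1, ..., D_m and distinct degrees δ_0 = 0 < δ_1 < ... < δ_m, one has δ_{k+1} = δ_k + |D_{m-k}| for all k = 0, 1, ..., m-1 with k ≠ ⌊m/2⌋, and δ_{k+1} = δ_k + |D_{m-k}| − 1 for k = ⌊m/2⌋. -/

import Mathlib

open SimpleGraph Finset

/-- A threshold graph: there exist a nonnegative vertex weight function and a
nonnegative threshold `t` such that distinct vertices are adjacent iff the sum
of their weights exceeds `t`. -/
def SimpleGraph.IsThreshold {V : Type} (G : SimpleGraph V) : Prop :=
  ∃ (f : V → ℝ) (t : ℝ), (∀ v, 0 ≤ f v) ∧ 0 ≤ t ∧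
    ∀ u v : V, u ≠ v → (G.Adj u v ↔ f u + f v > t)

/-- Degree of a vertex (no decidability assumptions). -/
noncomputable def SimpleGraph.deg {V : Type} [Fintype V] (G : SimpleGraph V) (v : V) : ℕ :=
  Nat.card {u // G.Adj v u}

/-- `δ 0 = 0 < δ 1 < ⋯ < δ m` are exactly the degrees occurring in `G`;
the degree partition of `G` is `D_i = {v : deg v = δ i}`, `i = 0, …, m`. -/
structure SimpleGraph.DegreePartition {V : Type} [Fintype V] (G : SimpleGraph V)
    (m : ℕ) (δ : ℕ → ℕ) : Prop where
  zero : δ 0 = 0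
  mono : ∀ i j, i < j → j ≤ m → δ i < δ j
  cover : ∀ v : V, ∃ i ≤ m, G.deg v = δ i
  attained : ∀ i, 1 ≤ i → i ≤ m → ∃ v : V, G.deg v = δ i

/-- The degree set `D_i` of the degree partition. -/
noncomputable def SimpleGraph.Dset {V : Type} [Fintype V] (G : SimpleGraph V)
    (δ : ℕ → ℕ) (i : ℕ) : Finset V :=
  Finset.univ.filter (fun v => G.deg v = δ i)

/-- A key edge of a threshold graph with degree partition `D_0, …, D_m`: an edge
joining `D_k` and `D_{m+1-k}` for some `1 ≤ k ≤ ⌈m/2⌉`. -/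
def SimpleGraph.IsKeyEdge {V : Type} [Fintype V] (G : SimpleGraph V)
    (m : ℕ) (δ : ℕ → ℕ) (e : Sym2 V) : Prop :=
  e ∈ G.edgeSet ∧ ∃ x y k, e = s(x, y) ∧ 1 ≤ k ∧ k ≤ (m + 1) / 2 ∧
    G.deg x = δ k ∧ G.deg y = δ (m + 1 - k)

/-- The number of Hamilton cycles of `G`, counted as unordered spanning cycles
(a cycle is identified with its edge set). -/
noncomputable def SimpleGraph.hamCycleCount {V : Type} [Fintype V] [DecidableEq V]
    (G : SimpleGraph V) : ℕ :=
  Nat.card {s : Finset (Sym2 V) // ∃ (v : V) (w : G.Walk v v),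
    w.IsHamiltonianCycle ∧ w.edges.toFinset = s}

/-- The multiset of degrees of `G`. -/
noncomputable def SimpleGraph.degMultiset {V : Type} [Fintype V] (G : SimpleGraph V) :
    Multiset ℕ :=
  Finset.univ.val.map G.deg

/-- The degree sequence `n-1, n-1, n-2, …, ⌈n/2⌉, ⌈n/2⌉, …, 3, 2` of the graph `Gₙ`,
as a multiset: the values `2, …, n-1` together with an extra copy of `⌈n/2⌉` and of `n-1`. -/
def gnDegSeq (n : ℕ) : Multiset ℕ :=
  (Multiset.range (n - 2)).map (· + 2) + {(n + 1) / 2, n - 1}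

/-- An independent set in a graph. -/
def SimpleGraph.IsIndepSet' {V : Type} (G : SimpleGraph V) (S : Set V) : Prop :=
  ∀ u ∈ S, ∀ v ∈ S, u ≠ v → ¬ G.Adj u v

/-!
In a threshold graph, neighbourhoods are nested by degree: if `deg u ≤ deg w`, every neighbour of
`u` other than `w` is a neighbour of `w`. Hence a non-isolated vertex `v` is adjacent to exactly
the other vertices whose degree is at least the smallest degree `c` of its neighbours, which gives
`deg v + [c ≤ deg v] = #{x | c ≤ deg x}`. For `v ∈ D i` write `c = δ (σ i)`; as `i` grows the left
side grows, and the right side strictly decreases in `σ i`, so `σ` is a strictly decreasing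
self-map of `{1, …, m}`, i.e. `σ i = m + 1 - i`. So `δ i + [m + 1 ≤ 2 i] = |D (m+1-i)| + ⋯ + |D m|`,
and subtracting consecutive instances gives the recurrence; the correction term is the step of
`[m + 1 ≤ 2 i]` between `i = ⌊m/2⌋` and `i = ⌊m/2⌋ + 1`.
-/

lemma StrictAntiOn.eq_add_one_sub_of_mapsTo_Icc {σ : ℕ → ℕ} {m : ℕ}
    (hσ : StrictAntiOn σ (Set.Icc 1 m)) (hmaps : Set.MapsTo σ (Set.Icc 1 m) (Set.Icc 1 m))
    {i : ℕ} (hi : i ∈ Set.Icc 1 m) : σ i = m + 1 - i := by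
  have gap : ∀ d i, 1 ≤ i → i + d ≤ m → σ (i + d) + d ≤ σ i := by
    intro d
    induction d with
    | zero => simp
    | succ d ih =>
      intro i h1 h2
      have := hσ ⟨by omega, by omega⟩ ⟨by omega, h2⟩ (show i + d < i + (d + 1) by omega)
      have := ih i h1 (by omega)
      omega
  obtain ⟨h1, h2⟩ := hi
  have lower := gap (m - i) i h1 (by omega)
  have upper := gap (i - 1) 1 le_rfl (by omega)
  rw [Nat.add_sub_cancel' h2] at lower
  rw [Nat.add_sub_cancel' h1] at upper
  have := (hmaps (⟨h1.trans h2, le_rfl⟩ : m ∈ Set.Icc 1 m)).1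
  have := (hmaps (⟨le_rfl, h1.trans h2⟩ : 1 ∈ Set.Icc 1 m)).2
  omega

lemma strictAntiOn_of_add_ite_eq {δ c σ : ℕ → ℕ} {s : Set ℕ} (hδ : StrictMonoOn δ s)
    (hc : StrictAntiOn c s) (hmaps : Set.MapsTo σ s s)
    (h : ∀ i ∈ s, δ i + (if σ i ≤ i then 1 else 0) = c (σ i)) : StrictAntiOn σ s := by
  intro i hi i' hi' hii'
  by_contra hle
  have e := h i hi
  have e' := h i' hi'
  have := hδ hi hi' hii'
  rcases (not_lt.mp hle).eq_or_lt with heq | hlt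
  · rw [heq] at e
    split_ifs at e e' <;> omega
  · have := hc (hmaps hi) (hmaps hi') hlt
    split_ifs at e e' <;> omega

namespace SimpleGraph

section

variable {V : Type} (G : SimpleGraph V)

def Dominates (w u : V) : Prop :=
  ∀ ⦃v⦄, v ≠ w → G.Adj u v → G.Adj w v

variable {G} [Fintype V]

lemma deg_eq_degree [DecidableRel G.Adj] (v : V) : G.deg v = G.degree v := by
  rw [deg, Nat.card_eq_fintype_card, ← card_neighborSet_eq_degree]
  exact Fintype.card_congr (Equiv.refl _)

lemma deg_pos_iff_exists_adj {v : V} : 0 < G.deg v ↔ ∃ w, G.Adj v w := by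
  classical
  rw [deg_eq_degree, degree_pos_iff_exists_adj]

lemma deg_eq_card_erase_add_ite [DecidableEq V] [DecidableRel G.Adj] (u w : V) :
    G.deg u = ((G.neighborFinset u).erase w).card + if G.Adj u w then 1 else 0 := by
  rw [card_erase_eq_ite, deg_eq_degree, ← card_neighborFinset_eq_degree]
  split_ifs with h₁ h₂ h₂
  · exact (Nat.sub_add_cancel (card_pos.mpr ⟨w, h₁⟩)).symm
  · exact absurd ((mem_neighborFinset G u w).mp h₁) h₂
  · exact absurd ((mem_neighborFinset G u w).mpr h₂) h₁
  · rfl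

lemma Dominates.neighborFinset_erase_subset [DecidableEq V] [DecidableRel G.Adj] {u w : V}
    (h : G.Dominates w u) : (G.neighborFinset u).erase w ⊆ (G.neighborFinset w).erase u := by
  intro v hv
  rw [mem_erase, mem_neighborFinset] at hv ⊢
  exact ⟨hv.2.ne', h hv.1 hv.2⟩

lemma Dominates.dominates_of_deg_le {u w : V} (h : G.Dominates w u) (hd : G.deg w ≤ G.deg u) :
    G.Dominates u w := by
  classical
  have hcard : ((G.neighborFinset w).erase u).card ≤ ((G.neighborFinset u).erase w).card := by
    rw [deg_eq_card_erase_add_ite u w, deg_eq_card_erase_add_ite w u, adj_comm] at hd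
    omega
  have heq := eq_of_subset_of_card_le h.neighborFinset_erase_subset hcard
  intro v hvu hwv
  have hv : v ∈ (G.neighborFinset w).erase u := by simp [hvu, hwv]
  rw [← heq] at hv
  simpa using (mem_erase.mp hv).2

lemma exists_adj_forall_deg_le {v u : V} (h : G.Adj v u) :
    ∃ w, G.Adj v w ∧ ∀ x, G.Adj v x → G.deg w ≤ G.deg x := by
  classical
  obtain ⟨w₀, hw₀, hmin⟩ := ({x | G.Adj v x} : Finset V).exists_min_image G.deg ⟨u, by simpa⟩
  exact ⟨w₀, by simpa using hw₀, fun x hx => hmin x (by simpa)⟩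

variable (G) in
noncomputable def degGeCount (d : ℕ) : ℕ := #{v | d ≤ G.deg v}

end

namespace IsThreshold

variable {V : Type} {G : SimpleGraph V}

lemma dominates_or_dominates (hG : G.IsThreshold) (u w : V) :
    G.Dominates w u ∨ G.Dominates u w := by
  obtain ⟨f, t, -, -, hadj⟩ := hG
  have of_le : ∀ a b, f a ≤ f b → G.Dominates b a := fun a b hab v hvb hav =>
    (hadj b v hvb.symm).mpr (by linarith [(hadj a v hav.ne).mp hav])
  exact (le_total (f u) (f w)).imp (of_le u w) (of_le w u)

variable [Fintype V]

lemma dominates_of_deg_le (hG : G.IsThreshold) {u w : V} (hd : G.deg u ≤ G.deg w) :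
    G.Dominates w u :=
  (hG.dominates_or_dominates u w).elim id fun h => h.dominates_of_deg_le hd

lemma adj_iff (hG : G.IsThreshold) {v w : V} (hvw : G.Adj v w)
    (hmin : ∀ x, G.Adj v x → G.deg w ≤ G.deg x) (x : V) :
    G.Adj v x ↔ x ≠ v ∧ G.deg w ≤ G.deg x :=
  ⟨fun h => ⟨h.ne', hmin x h⟩,
    fun ⟨hxv, hle⟩ => (hG.dominates_of_deg_le hle hxv.symm hvw.symm).symm⟩

lemma deg_add_ite_eq (hG : G.IsThreshold) {v w : V} (hvw : G.Adj v w)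
    (hmin : ∀ x, G.Adj v x → G.deg w ≤ G.deg x) :
    G.deg v + (if G.deg w ≤ G.deg v then 1 else 0) = G.degGeCount (G.deg w) := by
  classical
  have hN : G.neighborFinset v = ({x | G.deg w ≤ G.deg x} : Finset V).erase v := by
    ext x
    simp [hG.adj_iff hvw hmin x]
  have hdeg : G.deg v = (({x | G.deg w ≤ G.deg x} : Finset V).erase v).card := by
    rw [deg_eq_degree, ← card_neighborFinset_eq_degree, hN]
  split_ifs with h
  · rw [hdeg, card_erase_add_one (by simpa using h), degGeCount]
  · rw [hdeg, erase_eq_of_notMem (by simpa using h), add_zero, degGeCount]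

end IsThreshold

namespace DegreePartition

variable {V : Type} [Fintype V] {G : SimpleGraph V} {m : ℕ} {δ : ℕ → ℕ}

lemma strictMonoOn (hdp : G.DegreePartition m δ) : StrictMonoOn δ (Set.Iic m) :=
  fun i _ j hj hij => hdp.mono i j hij hj

lemma Dset_nonempty (hdp : G.DegreePartition m δ) {i : ℕ} (h1 : 1 ≤ i) (h2 : i ≤ m) :
    (G.Dset δ i).Nonempty := by
  obtain ⟨v, hv⟩ := hdp.attained i h1 h2
  exact ⟨v, by simp [Dset, hv]⟩

lemma degGeCount_eq_sum (hdp : G.DegreePartition m δ) {j : ℕ} (hj : j ≤ m) :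
    G.degGeCount (δ j) = ∑ l ∈ Ico j (m + 1), #(G.Dset δ l) := by
  classical
  rw [degGeCount, ← card_biUnion]
  · congr 1
    ext v
    simp only [mem_filter, mem_univ, true_and, mem_biUnion, mem_Ico, Dset]
    obtain ⟨i, hi, hv⟩ := hdp.cover v
    constructor
    · intro h
      exact ⟨i, ⟨(hdp.strictMonoOn.le_iff_le hj hi).mp (hv ▸ h), by omega⟩, hv⟩
    · rintro ⟨l, ⟨hjl, hl⟩, hvl⟩
      rw [hvl]
      exact hdp.strictMonoOn.monotoneOn hj (show l ≤ m by omega) hjl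
  · intro a ha b hb hab
    rw [Function.onFun, Finset.disjoint_left]
    intro v hva hvb
    simp only [Dset, mem_filter, mem_univ, true_and] at hva hvb
    have ha' : a ≤ m := by simp at ha; omega
    have hb' : b ≤ m := by simp at hb; omega
    exact hab (hdp.strictMonoOn.injOn ha' hb' (hva ▸ hvb))

lemma degGeCount_strictAntiOn (hdp : G.DegreePartition m δ) :
    StrictAntiOn (fun j => G.degGeCount (δ j)) (Set.Icc 1 m) := by
  intro j ⟨hj1, hjm⟩ j' ⟨_, hj'm⟩ hjj'
  simp only [hdp.degGeCount_eq_sum hjm, hdp.degGeCount_eq_sum hj'm]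
  refine sum_lt_sum_of_subset (Ico_subset_Ico_left hjj'.le) (i := j) (by simp; omega)
    (by simp; omega) (hdp.Dset_nonempty hj1 hjm).card_pos fun _ _ _ => Nat.zero_le _

/-- Here `δ j` is the smallest degree among the neighbours of a vertex of `D i`. -/
lemma exists_add_ite_eq_degGeCount (hG : G.IsThreshold) (hdp : G.DegreePartition m δ) {i : ℕ}
    (hi : i ∈ Set.Icc 1 m) :
    ∃ j ∈ Set.Icc 1 m, δ i + (if j ≤ i then 1 else 0) = G.degGeCount (δ j) := by
  obtain ⟨v, hv⟩ := hdp.attained i hi.1 hi.2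
  have hpos : 0 < G.deg v := hv ▸ hdp.zero ▸ hdp.mono 0 i hi.1 hi.2
  obtain ⟨w₀, hvw₀⟩ := deg_pos_iff_exists_adj.mp hpos
  obtain ⟨w, hvw, hmin⟩ := exists_adj_forall_deg_le hvw₀
  obtain ⟨j, hjm, hw⟩ := hdp.cover w
  have hj : 1 ≤ j := by
    by_contra! h
    have := deg_pos_iff_exists_adj.mpr ⟨v, hvw.symm⟩
    rw [hw, Nat.lt_one_iff.mp h, hdp.zero] at this
    exact this.false
  refine ⟨j, ⟨hj, hjm⟩, ?_⟩
  have e := hG.deg_add_ite_eq hvw hmin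
  rw [hv, hw] at e
  simpa only [hdp.strictMonoOn.le_iff_le hjm hi.2] using e

/-- A vertex of `D i` is adjacent to exactly the other vertices of `D (m+1-i) ∪ ⋯ ∪ D m`; the
indicator counts whether it lies in that union itself. -/
lemma add_ite_eq_sum (hG : G.IsThreshold) (hdp : G.DegreePartition m δ) {i : ℕ} (hi : i ≤ m) :
    δ i + (if m + 1 ≤ 2 * i then 1 else 0) = ∑ l ∈ Ico (m + 1 - i) (m + 1), #(G.Dset δ l) := by
  rcases Nat.eq_zero_or_pos i with rfl | hi0
  · simp [hdp.zero]
  have hσ : ∀ i, ∃ j, i ∈ Set.Icc 1 m →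
      j ∈ Set.Icc 1 m ∧ δ i + (if j ≤ i then 1 else 0) = G.degGeCount (δ j) := fun i => by
    by_cases hi : i ∈ Set.Icc 1 m
    · obtain ⟨j, hj, e⟩ := exists_add_ite_eq_degGeCount hG hdp hi
      exact ⟨j, fun _ => ⟨hj, e⟩⟩
    · exact ⟨0, fun h => absurd h hi⟩
  choose σ hσ using hσ
  have hmaps : Set.MapsTo σ (Set.Icc 1 m) (Set.Icc 1 m) := fun i hi => (hσ i hi).1
  have hanti := strictAntiOn_of_add_ite_eq (hdp.strictMonoOn.mono Set.Icc_subset_Iic_self)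
    hdp.degGeCount_strictAntiOn hmaps fun i hi => (hσ i hi).2
  have hi' : i ∈ Set.Icc 1 m := ⟨hi0, hi⟩
  have e := (hσ i hi').2
  rw [hanti.eq_add_one_sub_of_mapsTo_Icc hmaps hi', hdp.degGeCount_eq_sum (by omega)] at e
  rw [← e]
  simp only [show m + 1 ≤ 2 * i ↔ m + 1 - i ≤ i by omega]

lemma add_ite_eq_add_card (hG : G.IsThreshold) (hdp : G.DegreePartition m δ) {k : ℕ}
    (hk : k < m) :
    δ (k + 1) + (if m + 1 ≤ 2 * (k + 1) then 1 else 0) =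
      δ k + (if m + 1 ≤ 2 * k then 1 else 0) + #(G.Dset δ (m - k)) := by
  rw [add_ite_eq_sum hG hdp hk, add_ite_eq_sum hG hdp hk.le, Nat.add_sub_add_right,
    sum_eq_sum_Ico_succ_bot (by omega), show m - k + 1 = m + 1 - k by omega, add_comm]

end DegreePartition

end SimpleGraph

/-- for a threshold graph, `δ_{k+1} = δ_k + |D_{m-k}|` for `k ≠ ⌊m/2⌋`
and `δ_{k+1} = δ_k + |D_{m-k}| - 1` for `k = ⌊m/2⌋`. -/
theorem stmt1 {V : Type} [Fintype V] (G : SimpleGraph V) (m : ℕ) (δ : ℕ → ℕ)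
    (hG : G.IsThreshold) (hdp : G.DegreePartition m δ) :
    (∀ k < m, k ≠ m / 2 → δ (k + 1) = δ k + (G.Dset δ (m - k)).card) ∧
    (m / 2 < m → δ (m / 2 + 1) + 1 = δ (m / 2) + (G.Dset δ (m - m / 2)).card) := by
  refine ⟨fun k hk hkm => ?_, fun hm => ?_⟩
  · have step := hdp.add_ite_eq_add_card hG hk
    split_ifs at step <;> omega
  · have step := hdp.add_ite_eq_add_card hG hm
    split_ifs at step <;> omega
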